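/- arXiv:0707.2118 — 7 statements merged into one kernel-verified Lean document; each statement's English description precedes it below -/
import Mathlib

section
/- For all natural numbers m and real numbers φ ≠ 0, (φ^(2m+1) + φ^(-(2m+1)))/(φ + φ^(-1)) = T_m(φ - φ^(-1)), where T_m(y) = Σ_{k=0}^{m} C(m+k, m-k) y^(2k). -/
open Finset

/-!
The quotient is a Fibonacci polynomial. If `a * c = -1`, the Binet argument gives
`a ^ n - c ^ n = (a - c) * F_n (a + c)`; with `a = φ` and `c = -φ⁻¹` and `n = 2m + 1` odd this reads
`φ ^ (2m+1) + φ⁻¹ ^ (2m+1) = (φ + φ⁻¹) * F_{2m+1} (φ - φ⁻¹)`. Finally `T_m = F_{2m+1}`: both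
`F_{2m+1}` and `F_{2m+2}` are binomial sums, and each step of the recurrence between them is
Pascal's rule.
-/

def fibPoly {R : Type*} [Semiring R] (y : R) : ℕ → R
  | 0 => 0
  | 1 => 1
  | n + 2 => y * fibPoly y (n + 1) + fibPoly y n

section Binet

variable {R : Type*} [CommRing R]

theorem sub_mul_fibPoly {a c : R} (hac : a * c = -1) :
    ∀ n, (a - c) * fibPoly (a + c) n = a ^ n - c ^ n
  | 0 => by simp [fibPoly]
  | 1 => by simp [fibPoly]
  | n + 2 => by
    simp only [fibPoly]
    linear_combination (a + c) * sub_mul_fibPoly hac (n + 1) + sub_mul_fibPoly hac n +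
      (a ^ n - c ^ n) * hac

end Binet

section ExplicitFormula

variable {R : Type*} [CommSemiring R]

theorem sum_range_choose_two_mul_succ (y : R) (m : ℕ) :
    ∑ k ∈ range (m + 2), ((m + 1 + k).choose (2 * k) : R) * y ^ (2 * k) =
      y * ∑ k ∈ range (m + 1), ((m + 1 + k).choose (2 * k + 1) : R) * y ^ (2 * k + 1) +
      ∑ k ∈ range (m + 1), ((m + k).choose (2 * k) : R) * y ^ (2 * k) := by
  have hshift : ∑ k ∈ range (m + 1), ((m + k).choose (2 * k) : R) * y ^ (2 * k) =
      ∑ k ∈ range (m + 1), ((m + k + 1).choose (2 * k + 2) : R) * y ^ (2 * k + 2) + 1 := by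
    have htop : ((m + m + 1).choose (2 * m + 2) : R) = 0 := by
      rw [Nat.choose_eq_zero_of_lt (by omega), Nat.cast_zero]
    rw [sum_range_succ', sum_range_succ, htop]
    simp [mul_add, add_assoc]
  rw [hshift, sum_range_succ', mul_sum, ← add_assoc, ← sum_add_distrib]
  congr 1
  · refine sum_congr rfl fun k _ => ?_
    rw [show m + 1 + (k + 1) = m + 1 + k + 1 by ring, show 2 * (k + 1) = 2 * k + 1 + 1 by ring,
      Nat.choose_succ_succ, show m + 1 + k = m + k + 1 by ring, Nat.cast_add]
    ring
  · simp

theorem sum_range_choose_two_mul_add_one_succ (y : R) (m : ℕ) :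
    ∑ k ∈ range (m + 2), ((m + 2 + k).choose (2 * k + 1) : R) * y ^ (2 * k + 1) =
      y * ∑ k ∈ range (m + 2), ((m + 1 + k).choose (2 * k) : R) * y ^ (2 * k) +
      ∑ k ∈ range (m + 1), ((m + 1 + k).choose (2 * k + 1) : R) * y ^ (2 * k + 1) := by
  have hextend : ∑ k ∈ range (m + 1), ((m + 1 + k).choose (2 * k + 1) : R) * y ^ (2 * k + 1) =
      ∑ k ∈ range (m + 2), ((m + 1 + k).choose (2 * k + 1) : R) * y ^ (2 * k + 1) := by
    rw [sum_range_succ _ (m + 1), Nat.choose_eq_zero_of_lt (by omega), Nat.cast_zero, zero_mul,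
      add_zero]
  rw [hextend, mul_sum, ← sum_add_distrib]
  refine sum_congr rfl fun k _ => ?_
  rw [show m + 2 + k = m + 1 + k + 1 by ring, Nat.choose_succ_succ, Nat.cast_add]
  ring

theorem fibPoly_eq_sum_choose (y : R) (m : ℕ) :
    fibPoly y (2 * m + 1) = ∑ k ∈ range (m + 1), ((m + k).choose (2 * k) : R) * y ^ (2 * k) ∧
    fibPoly y (2 * m + 2) =
      ∑ k ∈ range (m + 1), ((m + 1 + k).choose (2 * k + 1) : R) * y ^ (2 * k + 1) := by
  induction m with
  | zero => simp [fibPoly]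
  | succ m ih =>
    have hodd : fibPoly y (2 * (m + 1) + 1) =
        ∑ k ∈ range (m + 2), ((m + 1 + k).choose (2 * k) : R) * y ^ (2 * k) := by
      rw [sum_range_choose_two_mul_succ, ← ih.1, ← ih.2]
      rfl
    refine ⟨hodd, ?_⟩
    rw [sum_range_choose_two_mul_add_one_succ, ← hodd, ← ih.2]
    rfl

theorem fibPoly_two_mul_add_one (y : R) (m : ℕ) :
    fibPoly y (2 * m + 1) = ∑ k ∈ range (m + 1), ((m + k).choose (m - k) : R) * y ^ (2 * k) := by
  rw [(fibPoly_eq_sum_choose y m).1]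
  refine sum_congr rfl fun k hk => ?_
  rw [Nat.choose_symm_of_eq_add (by have := mem_range.1 hk; omega : m + k = (m - k) + 2 * k)]

end ExplicitFormula

theorem quartic_T_identity (m : ℕ) (φ : ℝ) (hφ : 0 < φ) :
    (φ ^ (2 * m + 1) + (φ⁻¹) ^ (2 * m + 1)) / (φ + φ⁻¹) =
      ∑ k ∈ range (m + 1), (Nat.choose (m + k) (m - k) : ℝ) * (φ - φ⁻¹) ^ (2 * k) := by
  have hprod : φ * -φ⁻¹ = -1 := by field_simp
  have key : φ ^ (2 * m + 1) + φ⁻¹ ^ (2 * m + 1) =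
      (φ + φ⁻¹) * fibPoly (φ - φ⁻¹) (2 * m + 1) := by
    have binet := sub_mul_fibPoly hprod (2 * m + 1)
    rw [Odd.neg_pow (odd_two_mul_add_one m), sub_neg_eq_add, sub_neg_eq_add, ← sub_eq_add_neg]
      at binet
    exact binet.symm
  rw [div_eq_iff (by positivity), ← fibPoly_two_mul_add_one, key, mul_comm]
end

section
/- The sequence t_m = T_m(φ - φ^(-1)), where T_m(y) = Σ_{k=0}^{m} C(m+k, m-k) y^(2k) and φ > 0 is a fixed real, satisfies the recurrence t_{m+2} - (φ^2 + φ^(-2)) t_{m+1} + t_m = 0 for all natural numbers m. -/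
open Finset

/-! The sequence is `t m = b m ((φ - φ⁻¹) ^ 2)` for the Morgan–Voyce polynomials
`b m x = ∑ₖ C(m + k, 2k) xᵏ`, and `(φ - φ⁻¹) ^ 2 + 2 = φ ^ 2 + φ⁻¹ ^ 2`. So it suffices that
`b (m + 2) + b m = (x + 2) b (m + 1)`, which compares coefficients of `xᵏ⁺¹` through a double
application of Pascal's rule. -/

theorem Nat.choose_add_two_add_choose (n j : ℕ) :
    (n + 2).choose (j + 2) + n.choose (j + 2) = 2 * (n + 1).choose (j + 2) + n.choose j := by
  have h₁ : (n + 2).choose (j + 2) = (n + 1).choose (j + 1) + (n + 1).choose (j + 2) :=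
    Nat.choose_succ_succ' (n + 1) (j + 1)
  have h₂ : (n + 1).choose (j + 1) = n.choose j + n.choose (j + 1) := Nat.choose_succ_succ' n j
  have h₃ : (n + 1).choose (j + 2) = n.choose (j + 1) + n.choose (j + 2) :=
    Nat.choose_succ_succ' n (j + 1)
  omega

section MorganVoyce

variable {R : Type*} [CommRing R]

def morganVoyce (m : ℕ) (x : R) : R :=
  ∑ k ∈ range (m + 1), ((m + k).choose (2 * k) : R) * x ^ k

theorem morganVoyce_eq_sum_range {m N : ℕ} (h : m + 1 ≤ N) (x : R) :
    morganVoyce m x = ∑ k ∈ range N, ((m + k).choose (2 * k) : R) * x ^ k := by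
  refine sum_subset (range_subset_range.mpr h) fun k _ hk => ?_
  rw [mem_range, not_lt] at hk
  rw [Nat.choose_eq_zero_of_lt (by omega), Nat.cast_zero, zero_mul]

theorem morganVoyce_eq_sum_range_succ' {m N : ℕ} (h : m + 1 ≤ N + 1) (x : R) :
    morganVoyce m x = ∑ k ∈ range N, ((m + (k + 1)).choose (2 * (k + 1)) : R) * x ^ (k + 1) + 1 := by
  rw [morganVoyce_eq_sum_range h, sum_range_succ']
  simp

theorem morganVoyce_add_two (m : ℕ) (x : R) :
    morganVoyce (m + 2) x + morganVoyce m x = (x + 2) * morganVoyce (m + 1) x := by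
  have hb₂ := morganVoyce_eq_sum_range_succ' (m := m + 2) (N := m + 2) le_rfl x
  have hb₁ := morganVoyce_eq_sum_range_succ' (m := m + 1) (N := m + 2) (by omega) x
  have hb₀ := morganVoyce_eq_sum_range_succ' (m := m) (N := m + 2) (by omega) x
  have hxb₁ : x * morganVoyce (m + 1) x
      = ∑ k ∈ range (m + 2), x * (((m + 1 + k).choose (2 * k) : R) * x ^ k) := by
    rw [morganVoyce, mul_sum]
  have hcoeff : ∀ k ∈ range (m + 2),
      ((m + 2 + (k + 1)).choose (2 * (k + 1)) : R) * x ^ (k + 1)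
        + ((m + (k + 1)).choose (2 * (k + 1)) : R) * x ^ (k + 1)
      = x * (((m + 1 + k).choose (2 * k) : R) * x ^ k)
        + 2 * (((m + 1 + (k + 1)).choose (2 * (k + 1)) : R) * x ^ (k + 1)) := by
    intro k _
    have hnat := Nat.choose_add_two_add_choose (m + 1 + k) (2 * k)
    rw [show m + 2 + (k + 1) = m + 1 + k + 2 by omega, show m + (k + 1) = m + 1 + k by omega,
      show m + 1 + (k + 1) = m + 1 + k + 1 by omega, show 2 * (k + 1) = 2 * k + 2 by omega]
    have hcast : (_ : R) = _ := congrArg (Nat.cast : ℕ → R) hnat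
    push_cast at hcast
    linear_combination x ^ (k + 1) * hcast
  have hsum := sum_congr rfl hcoeff
  rw [sum_add_distrib, sum_add_distrib, ← mul_sum _ _ (2 : R)] at hsum
  linear_combination hb₂ + hb₀ - hxb₁ - 2 * hb₁ + hsum

theorem morganVoyce_sq (m : ℕ) (y : R) :
    morganVoyce m (y ^ 2) = ∑ k ∈ range (m + 1), ((m + k).choose (m - k) : R) * y ^ (2 * k) := by
  refine sum_congr rfl fun k hk => ?_
  have hkm : k ≤ m := Nat.lt_succ_iff.mp (mem_range.mp hk)
  rw [← pow_mul, ← Nat.choose_symm (by omega), show m + k - 2 * k = m - k by omega]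

end MorganVoyce

theorem t_recurrence (φ : ℝ) (hφ : 0 < φ)
    (t : ℕ → ℝ)
    (ht : ∀ m, t m = ∑ k ∈ range (m + 1),
      (Nat.choose (m + k) (m - k) : ℝ) * (φ - φ⁻¹) ^ (2 * k)) :
    ∀ m : ℕ, t (m + 2) - (φ ^ 2 + (φ⁻¹) ^ 2) * t (m + 1) + t m = 0 := by
  intro m
  have hsq : φ ^ 2 + φ⁻¹ ^ 2 = (φ - φ⁻¹) ^ 2 + 2 := by
    field_simp
    ring
  simp only [ht, ← morganVoyce_sq, hsq]
  linear_combination morganVoyce_add_two m ((φ - φ⁻¹) ^ 2)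
end

section
/- For real numbers a > -1 and b > 0, the integral over (0, ∞) of 1/(b x^4 + 2 a x^2 + 1) dx equals π / (2√2 · √(a + √b)). -/
/-!
Cauchy–Schlömilch substitution. Writing `x⁴ + 2p x² + 1 = x² ((x - x⁻¹)² + 2(p + 1))`, the
integral becomes `∫₀^∞ x⁻² f(x - x⁻¹) dx` with `f u = (u² + 2(p + 1))⁻¹` even. The substitution
`u = x - x⁻¹`, a bijection `(0, ∞) → ℝ` with `du = (1 + x⁻²) dx`, gives
`∫₀^∞ (1 + x⁻²) f(x - x⁻¹) dx = ∫_ℝ f`, while `x ↦ x⁻¹` shows that the two halves of the left side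
agree. Hence the integral is `½ ∫_ℝ f = π / (2 √(2(p + 1)))`. The general case reduces to
`b = 1` by scaling `x` by `b^(1/4)`.
-/

open Real MeasureTheory Set

section CauchySchlomilch

variable {E : Type*} [NormedAddCommGroup E] [NormedSpace ℝ E]

lemma strictMonoOn_sub_inv : StrictMonoOn (fun x : ℝ => x - x⁻¹) (Ioi 0) :=
  fun _ hx _ _ hxy => sub_lt_sub hxy (inv_strictAnti₀ hx hxy)

lemma image_sub_inv_Ioi : (fun x : ℝ => x - x⁻¹) '' Ioi 0 = univ := by
  refine eq_univ_of_forall fun u => ?_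
  set s := √(u ^ 2 + 4)
  have hs : s ^ 2 = u ^ 2 + 4 := sq_sqrt (by positivity)
  have hus : |u| < s := by
    rw [← sqrt_sq_eq_abs]
    exact sqrt_lt_sqrt (sq_nonneg u) (by linarith)
  have hpos : 0 < (u + s) / 2 := by linarith [neg_abs_le u]
  refine ⟨(u + s) / 2, hpos, ?_⟩
  have hinv : ((u + s) / 2)⁻¹ = (s - u) / 2 :=
    inv_eq_of_mul_eq_one_right (by linear_combination hs / 4)
  simp only [hinv]
  ring

lemma hasDerivWithinAt_sub_inv {x : ℝ} (hx : x ∈ Ioi 0) :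
    HasDerivWithinAt (fun x : ℝ => x - x⁻¹) (1 + (x ^ 2)⁻¹) (Ioi 0) x := by
  simpa using ((hasDerivAt_id x).fun_sub (hasDerivAt_inv (ne_of_gt hx))).hasDerivWithinAt

lemma integral_Ioi_one_add_inv_sq_smul_comp_sub_inv (f : ℝ → E) :
    ∫ x in Ioi 0, (1 + (x ^ 2)⁻¹) • f (x - x⁻¹) = ∫ u, f u := by
  have := integral_image_eq_integral_abs_deriv_smul measurableSet_Ioi
    (fun _ hx => hasDerivWithinAt_sub_inv hx) strictMonoOn_sub_inv.injOn f
  rw [image_sub_inv_Ioi, Measure.restrict_univ] at this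
  rw [this]
  refine setIntegral_congr_fun measurableSet_Ioi fun x _ => ?_
  rw [abs_of_pos (by positivity)]

lemma MeasureTheory.Integrable.integrableOn_Ioi_one_add_inv_sq_smul_comp_sub_inv {f : ℝ → E}
    (hf : Integrable f) : IntegrableOn (fun x => (1 + (x ^ 2)⁻¹) • f (x - x⁻¹)) (Ioi 0) := by
  have := (integrableOn_image_iff_integrableOn_abs_deriv_smul measurableSet_Ioi
    (fun _ hx => hasDerivWithinAt_sub_inv hx) strictMonoOn_sub_inv.injOn f).mp
    (by rw [image_sub_inv_Ioi]; exact hf.integrableOn)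
  refine this.congr_fun (fun x _ => ?_) measurableSet_Ioi
  dsimp only
  rw [abs_of_pos (by positivity)]

lemma integral_Ioi_inv_sq_smul_comp_inv (g : ℝ → E) :
    ∫ x in Ioi 0, (x ^ 2)⁻¹ • g x⁻¹ = ∫ x in Ioi 0, g x := by
  rw [← integral_comp_rpow_Ioi g (p := -1) (by norm_num)]
  refine setIntegral_congr_fun measurableSet_Ioi fun x hx => ?_
  norm_num [rpow_neg (le_of_lt hx), rpow_neg_one]

theorem MeasureTheory.Integrable.integral_Ioi_inv_sq_smul_comp_sub_inv {f : ℝ → E}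
    (hf : Integrable f) (heven : ∀ u, f (-u) = f u) :
    ∫ x in Ioi 0, (x ^ 2)⁻¹ • f (x - x⁻¹) = (2 : ℝ)⁻¹ • ∫ u, f u := by
  have hsum := hf.integrableOn_Ioi_one_add_inv_sq_smul_comp_sub_inv
  have hcomp : IntegrableOn (fun x => f (x - x⁻¹)) (Ioi 0) := by
    have := hsum.bdd_smul 1 (φ := fun x : ℝ => (1 + (x ^ 2)⁻¹)⁻¹)
      (by fun_prop (disch := intro x; positivity)) ?_
    · refine IntegrableOn.congr_fun this (fun x _ => ?_) measurableSet_Ioi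
      simp only [Pi.smul_apply', smul_smul]
      rw [inv_mul_cancel₀ (by positivity), one_smul]
    · filter_upwards with x
      rw [norm_inv, norm_of_nonneg (by positivity)]
      exact inv_le_one_of_one_le₀ (by simp [sq_nonneg])
  have hinversion : ∫ x in Ioi 0, (x ^ 2)⁻¹ • f (x - x⁻¹) = ∫ x in Ioi 0, f (x - x⁻¹) := by
    rw [← integral_Ioi_inv_sq_smul_comp_inv (fun x => f (x - x⁻¹))]
    refine setIntegral_congr_fun measurableSet_Ioi fun x _ => ?_
    simp only [inv_inv, ← heven (x - x⁻¹), neg_sub]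
  have hsplit : ∫ x in Ioi 0, (x ^ 2)⁻¹ • f (x - x⁻¹) =
      (∫ u, f u) - ∫ x in Ioi 0, f (x - x⁻¹) := by
    rw [← integral_Ioi_one_add_inv_sq_smul_comp_sub_inv f, ← integral_sub hsum hcomp]
    refine setIntegral_congr_fun measurableSet_Ioi fun x _ => ?_
    simp only [add_smul, one_smul, add_sub_cancel_left]
  rw [← hinversion] at hsplit
  rw [eq_inv_smul_iff₀ two_ne_zero, two_smul]
  exact eq_sub_iff_add_eq.mp hsplit

end CauchySchlomilch

lemma inv_sq_add_eq {c : ℝ} (hc : 0 < c) (u : ℝ) :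
    (u ^ 2 + c)⁻¹ = c⁻¹ * (1 + (u / √c) ^ 2)⁻¹ := by
  rw [div_pow, sq_sqrt hc.le]
  field_simp
  ring

lemma integrable_inv_sq_add {c : ℝ} (hc : 0 < c) : Integrable fun u : ℝ => (u ^ 2 + c)⁻¹ := by
  simp_rw [inv_sq_add_eq hc]
  exact (integrable_inv_one_add_sq.comp_div (sqrt_pos.mpr hc).ne').const_mul _

lemma integral_inv_sq_add {c : ℝ} (hc : 0 < c) : ∫ u : ℝ, (u ^ 2 + c)⁻¹ = π / √c := by
  have hs : 0 < √c := sqrt_pos.mpr hc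
  simp_rw [inv_sq_add_eq hc]
  rw [integral_const_mul, Measure.integral_comp_div (fun x => (1 + x ^ 2)⁻¹),
    integral_univ_inv_one_add_sq, abs_of_pos hs, smul_eq_mul]
  nth_rw 1 [← sq_sqrt hc.le]
  field_simp

lemma quartic_eq_sq_mul_sub_inv_sq_add {x : ℝ} (hx : x ≠ 0) (p : ℝ) :
    x ^ 4 + 2 * p * x ^ 2 + 1 = x ^ 2 * ((x - x⁻¹) ^ 2 + 2 * (p + 1)) := by
  field_simp
  ring

theorem integral_Ioi_one_div_quartic {p : ℝ} (hp : -1 < p) :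
    ∫ x in Ioi 0, 1 / (x ^ 4 + 2 * p * x ^ 2 + 1) = π / (2 * √2 * √(p + 1)) := by
  have hc : 0 < 2 * (p + 1) := by linarith
  calc ∫ x in Ioi 0, 1 / (x ^ 4 + 2 * p * x ^ 2 + 1)
      = ∫ x in Ioi 0, (x ^ 2)⁻¹ • ((x - x⁻¹) ^ 2 + 2 * (p + 1))⁻¹ := by
        refine setIntegral_congr_fun measurableSet_Ioi fun x hx => ?_
        rw [quartic_eq_sq_mul_sub_inv_sq_add (ne_of_gt hx), one_div, mul_inv, smul_eq_mul]
    _ = (2 : ℝ)⁻¹ • (π / √(2 * (p + 1))) := by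
        rw [(integrable_inv_sq_add hc).integral_Ioi_inv_sq_smul_comp_sub_inv (by simp),
          integral_inv_sq_add hc]
    _ = π / (2 * √2 * √(p + 1)) := by
        rw [sqrt_mul zero_le_two, smul_eq_mul]
        ring

theorem quartic_integral_base_general (a b : ℝ) (hb : 0 < b)
    (hab : 0 < a + Real.sqrt b) :
    ∫ x in Set.Ioi (0 : ℝ), 1 / (b * x ^ 4 + 2 * a * x ^ 2 + 1) =
      π / (2 * Real.sqrt 2 * Real.sqrt (a + Real.sqrt b)) := by
  set r := √(√b)
  have hsb : 0 < √b := sqrt_pos.mpr hb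
  have hr : 0 < r := sqrt_pos.mpr hsb
  have hr2 : r ^ 2 = √b := sq_sqrt hsb.le
  have hr4 : r ^ 4 = b := by rw [show r ^ 4 = (r ^ 2) ^ 2 by ring, hr2, sq_sqrt hb.le]
  have hp : -1 < a / √b := by rw [lt_div_iff₀ hsb]; linarith
  have hscale : √(a / √b + 1) * r = √(a + √b) := by
    rw [← sqrt_sq hr.le, ← sqrt_mul (by linarith), hr2]
    field_simp
  have hintegrand : ∀ x : ℝ, 1 / (b * x ^ 4 + 2 * a * x ^ 2 + 1) =
      1 / ((r * x) ^ 4 + 2 * (a / √b) * (r * x) ^ 2 + 1) := fun x => by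
    rw [mul_pow, mul_pow, hr4, hr2]
    field_simp
  simp_rw [hintegrand]
  rw [integral_comp_mul_left_Ioi (fun t => 1 / (t ^ 4 + 2 * (a / √b) * t ^ 2 + 1)) 0 hr,
    mul_zero, integral_Ioi_one_div_quartic hp, smul_eq_mul, ← hscale]
  field_simp

theorem quartic_integral_base (a b : ℝ) (ha : -1 < a) (hb : 0 < b)
    (hab : 0 < a + Real.sqrt b) :
    ∫ x in Set.Ioi (0 : ℝ), 1 / (b * x ^ 4 + 2 * a * x ^ 2 + 1) =
      π / (2 * Real.sqrt 2 * Real.sqrt (a + Real.sqrt b)) :=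
  quartic_integral_base_general a b hb hab
end

section
/- For every natural number m and natural number k with k ≤ m, the integral over (0, ∞) of t^(2k)/(1+t^2)^(m+1) dt equals (π / 2^(2m+1)) · binomial(2k, k) · binomial(2m-2k, m-k) / binomial(m, k). -/
open Real MeasureTheory Set Nat

/-!
Substituting `t = tan x` turns the integral into the trigonometric moment
`S(2k, 2n) = ∫₀^{π/2} sin^{2k} x cos^{2n} x dx` with `n = m - k`. Integration by parts and
`sin² = 1 - cos²` give `S(a + 2, b) = (a + 1) / (a + b + 2) · S(a, b)`; together with
`S(0, 0) = π / 2` and the symmetry `S(a, b) = S(b, a)` (from `x ↦ π/2 - x`) this recursion is solved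
by `π / 2^{2(k+n)+1} · C(2k, k) C(2n, n) / C(k + n, k)`, since the central binomial coefficients
and `C(k + n, k)` satisfy the matching first-order recursions.
-/

noncomputable def sinCosIntegral (a b : ℕ) : ℝ := ∫ x in (0 : ℝ)..π / 2, sin x ^ a * cos x ^ b

theorem sinCosIntegral_comm (a b : ℕ) : sinCosIntegral a b = sinCosIntegral b a := by
  have h := intervalIntegral.integral_comp_sub_left (a := 0) (b := π / 2)
    (fun x => sin x ^ b * cos x ^ a) (π / 2)
  simp only [sin_pi_div_two_sub, cos_pi_div_two_sub, sub_zero, sub_self] at h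
  rw [sinCosIntegral, sinCosIntegral, ← h]
  simp only [mul_comm]

theorem sinCosIntegral_add_two_right (a b : ℕ) :
    sinCosIntegral a (b + 2) = sinCosIntegral a b - sinCosIntegral (a + 2) b := by
  have hint (c : ℕ) : IntervalIntegrable (fun x => sin x ^ c * cos x ^ b) volume 0 (π / 2) :=
    (by fun_prop : Continuous _).intervalIntegrable _ _
  rw [sinCosIntegral, sinCosIntegral, sinCosIntegral,
    ← intervalIntegral.integral_sub (hint a) (hint (a + 2))]
  congr 1 with x
  linear_combination sin x ^ a * cos x ^ b * sin_sq_add_cos_sq x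

theorem sinCosIntegral_add_two_left_eq_mul_add_two_right (a b : ℕ) :
    sinCosIntegral (a + 2) b = (a + 1) / (b + 1) * sinCosIntegral a (b + 2) := by
  have hu (x : ℝ) : HasDerivAt (fun x => sin x ^ (a + 1)) ((a + 1) * sin x ^ a * cos x) x :=
    ((hasDerivAt_sin x).fun_pow (a + 1)).congr_deriv (by push_cast; ring)
  have hv (x : ℝ) : HasDerivAt (fun x => -cos x ^ (b + 1) / (b + 1)) (sin x * cos x ^ b) x :=
    (((hasDerivAt_cos x).fun_pow (b + 1)).fun_neg.div_const (b + 1 : ℝ)).congr_deriv (by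
      push_cast; field_simp)
  have hparts := intervalIntegral.integral_mul_deriv_eq_deriv_mul
    (fun x _ => hu x) (fun x _ => hv x)
    ((by fun_prop : Continuous fun x => (a + 1) * sin x ^ a * cos x).intervalIntegrable 0 (π / 2))
    ((by fun_prop : Continuous fun x => sin x * cos x ^ b).intervalIntegrable 0 (π / 2))
  simp only [sin_pi_div_two, cos_pi_div_two, sin_zero, zero_pow (succ_ne_zero _), neg_zero,
    zero_div, mul_zero, zero_mul, sub_zero, zero_sub, ← intervalIntegral.integral_neg] at hparts
  rw [sinCosIntegral, sinCosIntegral, ← intervalIntegral.integral_const_mul]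
  convert hparts using 1 <;> congr 1 with x
  · ring
  · field_simp
    ring

theorem sinCosIntegral_add_two_left (a b : ℕ) :
    sinCosIntegral (a + 2) b = (a + 1) / (a + b + 2) * sinCosIntegral a b := by
  have h := sinCosIntegral_add_two_left_eq_mul_add_two_right a b
  rw [sinCosIntegral_add_two_right] at h
  field_simp at h ⊢
  linear_combination h

theorem cast_centralBinom_succ (n : ℕ) :
    (centralBinom (n + 1) : ℝ) = 2 * (2 * n + 1) / (n + 1) * centralBinom n := by
  rw [div_mul_eq_mul_div, eq_div_iff (by positivity), mul_comm]
  exact_mod_cast succ_mul_centralBinom_succ n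

theorem cast_choose_succ_succ_eq_div_mul (n k : ℕ) :
    ((n + 1).choose (k + 1) : ℝ) = (n + 1) / (k + 1) * n.choose k := by
  rw [div_mul_eq_mul_div, eq_div_iff (by positivity)]
  exact_mod_cast (add_one_mul_choose_eq n k).symm

theorem sinCosIntegral_two_mul_zero (n : ℕ) :
    sinCosIntegral (2 * n) 0 = π / 2 ^ (2 * n + 1) * centralBinom n := by
  induction n with
  | zero => simp [sinCosIntegral]
  | succ n ih =>
    rw [Nat.mul_add_one, sinCosIntegral_add_two_left, ih, cast_centralBinom_succ]
    push_cast
    field_simp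
    ring

theorem sinCosIntegral_two_mul_two_mul (k n : ℕ) :
    sinCosIntegral (2 * k) (2 * n) =
      π / 2 ^ (2 * (k + n) + 1) * centralBinom k * centralBinom n / (k + n).choose k := by
  induction k with
  | zero => simp [sinCosIntegral_comm 0, sinCosIntegral_two_mul_zero]
  | succ k ih =>
    have hpos : (0 : ℝ) < (k + n).choose k := by exact_mod_cast choose_pos (Nat.le_add_right k n)
    rw [Nat.mul_add_one, sinCosIntegral_add_two_left, ih, Nat.add_right_comm,
      cast_centralBinom_succ, cast_choose_succ_succ_eq_div_mul]
    push_cast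
    field_simp
    ring

theorem image_tan_Ioo_zero_pi_div_two : tan '' Ioo 0 (π / 2) = Ioi 0 := by
  ext y
  constructor
  · rintro ⟨x, hx, rfl⟩
    exact tan_pos_of_pos_of_lt_pi_div_two hx.1 hx.2
  · intro hy
    refine ⟨arctan y, ⟨?_, arctan_lt_pi_div_two y⟩, tan_arctan y⟩
    simpa only [arctan_zero] using arctan_strictMono hy

theorem Ioo_zero_pi_div_two_subset : Ioo 0 (π / 2) ⊆ Ioo (-(π / 2)) (π / 2) :=
  Ioo_subset_Ioo_left (by linarith [pi_div_two_pos])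

theorem integral_Ioi_zero_eq_integral_comp_tan {E : Type*} [NormedAddCommGroup E] [NormedSpace ℝ E]
    (f : ℝ → E) : ∫ t in Ioi 0, f t = ∫ x in Ioo 0 (π / 2), (cos x ^ 2)⁻¹ • f (tan x) := by
  have hcos {x : ℝ} (hx : x ∈ Ioo 0 (π / 2)) : cos x ≠ 0 :=
    (cos_pos_of_mem_Ioo (Ioo_zero_pi_div_two_subset hx)).ne'
  rw [← image_tan_Ioo_zero_pi_div_two, integral_image_eq_integral_abs_deriv_smul measurableSet_Ioo
    (fun x hx => (hasDerivAt_tan (hcos hx)).hasDerivWithinAt)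
    (injOn_tan.mono Ioo_zero_pi_div_two_subset)]
  refine setIntegral_congr_fun measurableSet_Ioo fun x hx => ?_
  rw [abs_of_pos (by have := hcos hx; positivity), one_div]

theorem tan_pow_div_one_add_tan_sq_pow {x : ℝ} (hx : cos x ≠ 0) (k n : ℕ) :
    (cos x ^ 2)⁻¹ * (tan x ^ (2 * k) / (1 + tan x ^ 2) ^ (k + n + 1)) =
      sin x ^ (2 * k) * cos x ^ (2 * n) := by
  rw [div_eq_mul_inv, ← inv_pow (1 + tan x ^ 2), inv_one_add_tan_sq hx, tan_eq_sin_div_cos, div_pow]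
  field_simp
  ring

theorem integral_Ioi_pow_div_one_add_sq_pow (k n : ℕ) :
    ∫ t in Ioi 0, t ^ (2 * k) / (1 + t ^ 2) ^ (k + n + 1) = sinCosIntegral (2 * k) (2 * n) := by
  rw [integral_Ioi_zero_eq_integral_comp_tan, sinCosIntegral,
    intervalIntegral.integral_of_le pi_div_two_pos.le, integral_Ioc_eq_integral_Ioo]
  refine setIntegral_congr_fun measurableSet_Ioo fun x hx => ?_
  exact tan_pow_div_one_add_tan_sq_pow
    (cos_pos_of_mem_Ioo (Ioo_zero_pi_div_two_subset hx)).ne' k n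

theorem wallis_type_integral (m k : ℕ) (hk : k ≤ m) :
    ∫ t in Set.Ioi (0 : ℝ), t ^ (2 * k) / (1 + t ^ 2) ^ (m + 1) =
      (π / 2 ^ (2 * m + 1)) * (Nat.choose (2 * k) k : ℝ) *
        (Nat.choose (2 * m - 2 * k) (m - k) : ℝ) / (Nat.choose m k : ℝ) := by
  obtain ⟨n, rfl⟩ := Nat.exists_eq_add_of_le hk
  rw [integral_Ioi_pow_div_one_add_sq_pow, sinCosIntegral_two_mul_two_mul, ← Nat.mul_sub,
    Nat.add_sub_cancel_left, centralBinom_eq_two_mul_choose, centralBinom_eq_two_mul_choose]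
end

section
/- Let φ > 0 be real and set y = (φ − φ^(-1))/2, Q(x) = 1/(x⁴ + 2a x² + 1)^(m+1) for a real a > −1 and natural m. Define Q₁(y) = [Q(φ) + Q(−φ^(-1))] + ((φ² − 1)/(φ² + 1))·[Q(φ) − Q(−φ^(-1))]. Then Q₁(y) = T_m(2y) / (2^m (1 + a + 2y²)^(m+1)), where T_m(z) = Σ_{k=0}^m C(m+k, m-k) z^(2k). -/
/-! With `D = φ⁴ + 2aφ² + 1` one has `Q(-φ⁻¹) = φ^(4(m+1)) Q(φ)` and `1 + a + 2y² = D / (2φ²)`, so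
both sides are multiples of `(D^(m+1))⁻¹` and the claim reduces to
`(φ + φ⁻¹) T_m(φ - φ⁻¹) = φ^(2m+1) + φ^(-(2m+1))`. Here `T_m(t)` is the Fibonacci polynomial
`F_{2m+1}(t)`, and the identity is Binet's formula for the roots `φ, -φ⁻¹` of `X² - tX - 1`; it is
proved together with its companion for `F_{2m}` from the recurrence `F_{n+2} = t F_{n+1} + F_n`,
which is Pascal's rule on the coefficients. -/

open Finset

namespace FibonacciPoly

variable {R : Type*} [CommRing R]

/-- The Fibonacci polynomial `F_{2m+1}`. -/
def odd (m : ℕ) (t : R) : R :=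
  ∑ k ∈ range (m + 1), ((m + k).choose (2 * k) : R) * t ^ (2 * k)

/-- The Fibonacci polynomial `F_{2m}`. -/
def even (m : ℕ) (t : R) : R :=
  ∑ k ∈ range (m + 1), ((m + k).choose (2 * k + 1) : R) * t ^ (2 * k + 1)

theorem even_succ (m : ℕ) (t : R) : even (m + 1) t = t * odd m t + even m t := by
  have pascal : ∀ k, ((m + 1 + k).choose (2 * k + 1) : R) * t ^ (2 * k + 1) =
      t * (((m + k).choose (2 * k) : R) * t ^ (2 * k)) +
        ((m + k).choose (2 * k + 1) : R) * t ^ (2 * k + 1) := by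
    intro k
    rw [show m + 1 + k = m + k + 1 by omega, Nat.choose_succ_succ']
    push_cast
    ring
  rw [even, sum_range_succ, Nat.choose_eq_zero_of_lt (by omega), Nat.cast_zero, zero_mul,
    add_zero, sum_congr rfl fun k _ => pascal k, sum_add_distrib, ← mul_sum]
  rfl

theorem odd_succ (m : ℕ) (t : R) : odd (m + 1) t = t * even (m + 1) t + odd m t := by
  have pascal : ∀ k, ((m + 1 + (k + 1)).choose (2 * (k + 1)) : R) * t ^ (2 * (k + 1)) =
      t * (((m + 1 + k).choose (2 * k + 1) : R) * t ^ (2 * k + 1)) +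
        ((m + (k + 1)).choose (2 * (k + 1)) : R) * t ^ (2 * (k + 1)) := by
    intro k
    rw [show m + 1 + (k + 1) = m + 1 + k + 1 by omega, show 2 * (k + 1) = 2 * k + 1 + 1 by omega,
      Nat.choose_succ_succ', show m + 1 + k = m + (k + 1) by omega]
    push_cast
    ring
  have odd_shift : odd m t =
      ∑ k ∈ range (m + 1), ((m + (k + 1)).choose (2 * (k + 1)) : R) * t ^ (2 * (k + 1)) + 1 := by
    rw [odd, sum_range_succ' _ m, sum_range_succ _ m,
      Nat.choose_eq_zero_of_lt (n := m + (m + 1)) (by omega)]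
    simp
  rw [odd, sum_range_succ', sum_congr rfl fun k _ => pascal k, sum_add_distrib, ← mul_sum,
    odd_shift, even, sum_range_succ _ (m + 1),
    Nat.choose_eq_zero_of_lt (n := m + 1 + (m + 1)) (by omega)]
  simp only [Nat.cast_zero, zero_mul, add_zero, mul_zero, pow_zero, Nat.choose_zero_right,
    Nat.cast_one, mul_one]
  ring

theorem sub_mul_even_and_sub_mul_odd {α β : R} (h : α * β = -1) (m : ℕ) :
    (α - β) * even m (α + β) = α ^ (2 * m) - β ^ (2 * m) ∧
      (α - β) * odd m (α + β) = α ^ (2 * m + 1) - β ^ (2 * m + 1) := by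
  induction m with
  | zero => simp [even, odd]
  | succ m ih =>
    obtain ⟨h_even, h_odd⟩ := ih
    have h_even' : (α - β) * even (m + 1) (α + β) = α ^ (2 * (m + 1)) - β ^ (2 * (m + 1)) := by
      rw [even_succ]
      linear_combination (α + β) * h_odd + h_even + (α ^ (2 * m) - β ^ (2 * m)) * h
    refine ⟨h_even', ?_⟩
    rw [odd_succ]
    linear_combination (α + β) * h_even' + h_odd + (α ^ (2 * m + 1) - β ^ (2 * m + 1)) * h

theorem sq_add_one_mul_pow_mul_odd_sub_inv {K : Type*} [Field K] {φ : K} (hφ : φ ≠ 0) (m : ℕ) :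
    (φ ^ 2 + 1) * φ ^ (2 * m) * odd m (φ - φ⁻¹) = φ ^ (4 * m + 2) + 1 := by
  have binet := (sub_mul_even_and_sub_mul_odd (α := φ) (β := -φ⁻¹) (by field_simp) m).2
  rw [← sub_eq_add_neg, Odd.neg_pow (by simp)] at binet
  have hpow : φ ^ (2 * m + 1) * φ⁻¹ ^ (2 * m + 1) = 1 := by
    rw [← mul_pow, mul_inv_cancel₀ hφ, one_pow]
  linear_combination φ ^ (2 * m + 1) * binet + hpow -
    φ ^ (2 * m) * odd m (φ - φ⁻¹) * mul_inv_cancel₀ hφ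

theorem odd_eq_sum_choose_sub (m : ℕ) (t : R) :
    odd m t = ∑ k ∈ range (m + 1), ((m + k).choose (m - k) : R) * t ^ (2 * k) := by
  refine sum_congr rfl fun k hk => ?_
  rw [Nat.choose_symm_of_eq_add (by have := mem_range.mp hk; omega : m + k = 2 * k + (m - k))]

end FibonacciPoly

theorem Q1_formula_general (a : ℝ) (m : ℕ) (φ : ℝ) (hφ : 0 < φ)
    (y : ℝ) (hy : y = (φ - φ⁻¹) / 2)
    (Q : ℝ → ℝ) (hQ : ∀ x, Q x = 1 / (x ^ 4 + 2 * a * x ^ 2 + 1) ^ (m + 1)) :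
    (Q φ + Q (-φ⁻¹)) + ((φ ^ 2 - 1) / (φ ^ 2 + 1)) * (Q φ - Q (-φ⁻¹)) =
      (∑ k ∈ range (m + 1), (Nat.choose (m + k) (m - k) : ℝ) * (2 * y) ^ (2 * k)) /
        (2 ^ m * (1 + a + 2 * y ^ 2) ^ (m + 1)) := by
  have hφ0 : φ ≠ 0 := hφ.ne'
  set D := φ ^ 4 + 2 * a * φ ^ 2 + 1
  set S := FibonacciPoly.odd m (φ - φ⁻¹)
  have hQφ : Q φ = (D ^ (m + 1))⁻¹ := by rw [hQ, one_div]
  have hQψ : Q (-φ⁻¹) = φ ^ (4 * (m + 1)) * (D ^ (m + 1))⁻¹ := by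
    rw [hQ, show (-φ⁻¹) ^ 4 + 2 * a * (-φ⁻¹) ^ 2 + 1 = D * (φ ^ 4)⁻¹ by field_simp; ring,
      one_div, mul_pow, mul_inv, inv_pow, inv_inv, pow_mul, mul_comm]
  have hsum : ∑ k ∈ range (m + 1), (Nat.choose (m + k) (m - k) : ℝ) * (2 * y) ^ (2 * k) = S := by
    rw [← FibonacciPoly.odd_eq_sum_choose_sub, hy, mul_div_cancel₀ _ two_ne_zero]
  have hden : 2 ^ m * (1 + a + 2 * y ^ 2) ^ (m + 1) = D ^ (m + 1) * (2 * φ ^ (2 * (m + 1)))⁻¹ := by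
    rw [hy, show 1 + a + 2 * ((φ - φ⁻¹) / 2) ^ 2 = D * (2 * φ ^ 2)⁻¹ by field_simp; ring,
      mul_pow, inv_pow, mul_pow, ← pow_mul, pow_succ 2 m]
    field_simp
  have hnum : 1 + φ ^ (4 * (m + 1)) + (φ ^ 2 - 1) / (φ ^ 2 + 1) * (1 - φ ^ (4 * (m + 1))) =
      2 * φ ^ (2 * (m + 1)) * S := by
    rw [div_mul_eq_mul_div, add_div_eq_mul_add_div _ _ (by positivity), div_eq_iff (by positivity)]
    linear_combination (-2 * φ ^ 2) * FibonacciPoly.sq_add_one_mul_pow_mul_odd_sub_inv hφ0 m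
  calc _ = (1 + φ ^ (4 * (m + 1)) + (φ ^ 2 - 1) / (φ ^ 2 + 1) * (1 - φ ^ (4 * (m + 1)))) *
        (D ^ (m + 1))⁻¹ := by rw [hQφ, hQψ]; ring
    _ = 2 * φ ^ (2 * (m + 1)) * S * (D ^ (m + 1))⁻¹ := by rw [hnum]
    _ = _ := by rw [hsum, hden, div_eq_mul_inv, mul_inv, inv_inv]; ring

theorem Q1_formula (a : ℝ) (ha : -1 < a) (m : ℕ) (φ : ℝ) (hφ : 0 < φ)
    (y : ℝ) (hy : y = (φ - φ⁻¹) / 2)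
    (Q : ℝ → ℝ) (hQ : ∀ x, Q x = 1 / (x ^ 4 + 2 * a * x ^ 2 + 1) ^ (m + 1)) :
    (Q φ + Q (-φ⁻¹)) + ((φ ^ 2 - 1) / (φ ^ 2 + 1)) * (Q φ - Q (-φ⁻¹)) =
      (∑ k ∈ range (m + 1), (Nat.choose (m + k) (m - k) : ℝ) * (2 * y) ^ (2 * k)) /
        (2 ^ m * (1 + a + 2 * y ^ 2) ^ (m + 1)) :=
  Q1_formula_general a m φ hφ y hy Q hQ
end

section
/- For every real a > 0 and natural number m, (d/dc)^(m+1) evaluated at c = 0 of the function c ↦ √(a + √(1+c)) equals ((−1)^m m! / (π√2)) · ∫_0^∞ dx/(x⁴ + 2a x² + 1)^(m+1). -/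
open Real MeasureTheory

/-!
Differentiating under the integral sign gives
`∂ₜ ∫₀^∞ (x⁴ + 2ax² + t)^-(n+1) dx = -(n+1) ∫₀^∞ (x⁴ + 2ax² + t)^-(n+2) dx`, so by induction on `m`
it suffices to treat `m = 0`, for every `t > 0`, where `∂ₜ √(a + √t) = 1 / (4 √t √(a + √t))`.
That case is the closed form `∫₀^∞ dx / (x⁴ + 2ax² + s²) = π / (2√2 s √(a + s))`, obtained from
`x⁴ + 2ax² + s² = x² ((x - s/x)² + 2(a + s))` and the Cauchy–Schlömilch substitution: for even `g`,
the weights `1` and `s/x²` give the same integral of `g (x - s/x)` over `(0, ∞)` (substitute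
`x ↦ s/x`), while together they give `∫_ℝ g` (substitute `u = x - s/x`).
-/

open Set Filter Topology
open scoped Nat

section SchloemilchSubstitution

variable {E : Type*} [NormedAddCommGroup E] [NormedSpace ℝ E] {s : ℝ}

lemma hasDerivAt_sub_div (s : ℝ) {x : ℝ} (hx : x ≠ 0) :
    HasDerivAt (fun x => x - s / x) (1 + s / x ^ 2) x := by
  have h := (hasDerivAt_id' x).fun_sub ((hasDerivAt_inv hx).const_mul s)
  simpa only [← div_eq_mul_inv, mul_neg, sub_neg_eq_add] using h

lemma injOn_sub_div (hs : 0 ≤ s) : InjOn (fun x => x - s / x) (Ioi 0) := by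
  intro x (hx : 0 < x) y (hy : 0 < y) hxy
  have h : (x - y) * (x * y + s) = 0 := by
    field_simp at hxy
    linear_combination hxy
  rcases mul_eq_zero.1 h with h | h
  · linarith
  · nlinarith [mul_pos hx hy]

lemma image_sub_div_Ioi (hs : 0 < s) : (fun x => x - s / x) '' Ioi 0 = univ := by
  refine eq_univ_of_forall fun y => ?_
  set r := √(y ^ 2 + 4 * s)
  have hr : r ^ 2 = y ^ 2 + 4 * s := sq_sqrt (by positivity)
  have hyr : |y| < r := by
    rw [← sqrt_sq_eq_abs]
    exact sqrt_lt_sqrt (sq_nonneg y) (by linarith)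
  have hyr' : 0 < y + r := by linarith [neg_abs_le y]
  refine ⟨(y + r) / 2, mem_Ioi.2 (by positivity), ?_⟩
  field_simp
  linear_combination hr

lemma integral_Ioi_one_add_div_sq_smul_comp_sub_div (hs : 0 < s) (g : ℝ → E) :
    ∫ x in Ioi 0, (1 + s / x ^ 2) • g (x - s / x) = ∫ y, g y := by
  have h := integral_image_eq_integral_abs_deriv_smul measurableSet_Ioi
    (fun x (hx : 0 < x) => (hasDerivAt_sub_div s hx.ne').hasDerivWithinAt)
    (injOn_sub_div hs.le) g
  rw [image_sub_div_Ioi hs, setIntegral_univ] at h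
  rw [h]
  refine setIntegral_congr_fun measurableSet_Ioi fun x (hx : 0 < x) => ?_
  rw [abs_of_pos (by positivity)]

lemma integrableOn_Ioi_one_add_div_sq_smul_comp_sub_div (hs : 0 < s) {g : ℝ → E}
    (hg : Integrable g) :
    IntegrableOn (fun x => (1 + s / x ^ 2) • g (x - s / x)) (Ioi 0) := by
  have h := (integrableOn_image_iff_integrableOn_abs_deriv_smul measurableSet_Ioi
    (fun x (hx : 0 < x) => (hasDerivAt_sub_div s hx.ne').hasDerivWithinAt)
    (injOn_sub_div hs.le) g).1 (by rw [image_sub_div_Ioi hs]; exact hg.integrableOn)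
  refine h.congr_fun (fun x (hx : 0 < x) => ?_) measurableSet_Ioi
  dsimp only
  rw [abs_of_pos (by positivity)]

lemma integral_Ioi_div_sq_smul_comp_div (hs : 0 < s) (f : ℝ → E) :
    ∫ x in Ioi 0, (s / x ^ 2) • f (s / x) = ∫ x in Ioi 0, f x := by
  have hderiv : ∀ x ∈ Ioi (0 : ℝ), HasDerivWithinAt (fun x => s / x) (-(s / x ^ 2)) (Ioi 0) x :=
    fun x (hx : 0 < x) => by
      simpa [div_eq_mul_inv] using ((hasDerivAt_inv hx.ne').const_mul s).hasDerivWithinAt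
  have hinj : InjOn (fun x => s / x) (Ioi 0) := fun x (hx : 0 < x) y (hy : 0 < y) hxy => by
    field_simp at hxy; exact hxy.symm
  have himage : (fun x => s / x) '' Ioi 0 = Ioi 0 :=
    Subset.antisymm (image_subset_iff.2 fun x (hx : 0 < x) => div_pos hs hx)
      fun y (hy : 0 < y) => ⟨s / y, div_pos hs hy, by field_simp⟩
  have h := integral_image_eq_integral_abs_deriv_smul measurableSet_Ioi hderiv hinj f
  rw [himage] at h
  rw [h]
  refine setIntegral_congr_fun measurableSet_Ioi fun x (hx : 0 < x) => ?_
  rw [abs_neg, abs_of_pos (by positivity)]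

lemma integrableOn_Ioi_smul_comp_sub_div (hs : 0 < s) {g : ℝ → E} (hg : Continuous g)
    (hgi : Integrable g) {w : ℝ → ℝ} (hw : ContinuousOn w (Ioi 0))
    (hw_le : ∀ x ∈ Ioi (0 : ℝ), |w x| ≤ 1 + s / x ^ 2) :
    IntegrableOn (fun x => w x • g (x - s / x)) (Ioi 0) := by
  have hu : ContinuousOn (fun x : ℝ => x - s / x) (Ioi 0) :=
    fun x (hx : 0 < x) => (hasDerivAt_sub_div s hx.ne').continuousAt.continuousWithinAt
  have hdom := integrableOn_Ioi_one_add_div_sq_smul_comp_sub_div hs hgi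
  refine hdom.norm.mono'
    ((hw.smul (hg.comp_continuousOn hu)).aestronglyMeasurable measurableSet_Ioi) ?_
  refine (ae_restrict_iff' measurableSet_Ioi).2 (ae_of_all _ fun x (hx : 0 < x) => ?_)
  rw [norm_smul, norm_smul, norm_eq_abs, norm_eq_abs, abs_of_pos (by positivity : 0 < 1 + s / x ^ 2)]
  exact mul_le_mul_of_nonneg_right (hw_le x hx) (norm_nonneg _)

lemma integral_Ioi_div_sq_smul_comp_sub_div_of_even (hs : 0 < s) {g : ℝ → E}
    (hg : Continuous g) (hgi : Integrable g) (heven : ∀ y, g (-y) = g y) :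
    ∫ x in Ioi 0, (s / x ^ 2) • g (x - s / x) = (2 : ℝ)⁻¹ • ∫ y, g y := by
  have hle : ∀ x ∈ Ioi (0 : ℝ), |s / x ^ 2| ≤ 1 + s / x ^ 2 := fun x (hx : 0 < x) => by
    rw [abs_of_pos (by positivity)]; linarith
  have hint_weighted := integrableOn_Ioi_smul_comp_sub_div hs hg hgi (w := fun x => s / x ^ 2)
    (continuousOn_const.div (continuousOn_pow 2) fun x (hx : 0 < x) => by positivity) hle
  have hint : IntegrableOn (fun x => g (x - s / x)) (Ioi 0) := by
    simpa using integrableOn_Ioi_smul_comp_sub_div hs hg hgi (w := fun _ => 1) continuousOn_const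
      fun x (hx : 0 < x) => by rw [abs_one]; linarith [div_pos hs (pow_pos hx 2)]
  -- `x ↦ s / x` swaps `x - s / x` and its negative
  have hswap : ∫ x in Ioi 0, (s / x ^ 2) • g (x - s / x) = ∫ x in Ioi 0, g (x - s / x) := by
    calc _ = ∫ x in Ioi 0, (s / x ^ 2) • (fun y => g (y - s / y)) (s / x) := by
          refine setIntegral_congr_fun measurableSet_Ioi fun x (hx : 0 < x) => ?_
          dsimp only
          rw [div_div_cancel₀ hs.ne', show s / x - x = -(x - s / x) by ring, heven]
      _ = _ := integral_Ioi_div_sq_smul_comp_div hs (fun y => g (y - s / y))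
  have hsum := integral_Ioi_one_add_div_sq_smul_comp_sub_div hs g
  simp only [add_smul, one_smul] at hsum
  rw [integral_add hint hint_weighted, ← hswap] at hsum
  rw [← hsum, ← two_smul ℝ, smul_smul, inv_mul_cancel₀ two_ne_zero, one_smul]

end SchloemilchSubstitution

lemma integrable_inv_sq_add_sq {k : ℝ} (hk : k ≠ 0) : Integrable fun y : ℝ => (y ^ 2 + k ^ 2)⁻¹ := by
  refine ((integrable_inv_one_add_sq.comp_mul_left' (inv_ne_zero hk)).const_mul (k ^ 2)⁻¹).congr
    (ae_of_all _ fun y => ?_)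
  field_simp
  ring

lemma integral_univ_inv_sq_add_sq {k : ℝ} (hk : 0 < k) : ∫ y : ℝ, (y ^ 2 + k ^ 2)⁻¹ = π / k := by
  have h : ∀ y : ℝ, (y ^ 2 + k ^ 2)⁻¹ = (k ^ 2)⁻¹ * (1 + (k⁻¹ * y) ^ 2)⁻¹ := fun y => by
    field_simp
    ring
  simp_rw [h]
  rw [integral_const_mul, Measure.integral_comp_mul_left (fun y => (1 + y ^ 2)⁻¹),
    integral_univ_inv_one_add_sq, inv_inv, abs_of_pos hk, smul_eq_mul]
  field_simp

lemma continuous_inv_sq_add_sq {k : ℝ} (hk : k ≠ 0) : Continuous fun y : ℝ => (y ^ 2 + k ^ 2)⁻¹ :=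
  Continuous.inv₀ (by fun_prop) fun y => by positivity

section QuarticInverse

variable {a s k : ℝ}

lemma inv_quartic_eq_smul_comp_sub_div (hs : s ≠ 0) (hk : k ^ 2 = 2 * (a + s)) {x : ℝ}
    (hx : x ≠ 0) :
    (x ^ 4 + 2 * a * x ^ 2 + s ^ 2)⁻¹ = s⁻¹ * (s / x ^ 2 * ((x - s / x) ^ 2 + k ^ 2)⁻¹) := by
  rw [show x ^ 4 + 2 * a * x ^ 2 + s ^ 2 = x ^ 2 * ((x - s / x) ^ 2 + k ^ 2) by
    rw [hk]; field_simp; ring]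
  field_simp

lemma exists_sq_eq_two_mul_add (has : 0 < a + s) : ∃ k > 0, k ^ 2 = 2 * (a + s) :=
  ⟨√(2 * (a + s)), sqrt_pos.2 (by positivity), sq_sqrt (by positivity)⟩

lemma integrableOn_Ioi_inv_quartic (hs : 0 < s) (has : 0 < a + s) :
    IntegrableOn (fun x => (x ^ 4 + 2 * a * x ^ 2 + s ^ 2)⁻¹) (Ioi 0) := by
  obtain ⟨k, hk0, hk⟩ := exists_sq_eq_two_mul_add has
  have h := integrableOn_Ioi_smul_comp_sub_div hs (continuous_inv_sq_add_sq hk0.ne')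
    (integrable_inv_sq_add_sq hk0.ne') (w := fun x => s / x ^ 2)
    (continuousOn_const.div (continuousOn_pow 2) fun x (hx : 0 < x) => by positivity)
    fun x (hx : 0 < x) => by rw [abs_of_pos (by positivity)]; linarith
  refine IntegrableOn.congr_fun (h.const_mul s⁻¹) (fun x (hx : 0 < x) => ?_) measurableSet_Ioi
  rw [inv_quartic_eq_smul_comp_sub_div hs.ne' hk hx.ne', smul_eq_mul]

lemma integral_Ioi_inv_quartic (hs : 0 < s) (has : 0 < a + s) :
    ∫ x in Ioi 0, (x ^ 4 + 2 * a * x ^ 2 + s ^ 2)⁻¹ = π / (2 * √2 * s * √(a + s)) := by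
  obtain ⟨k, hk0, hk⟩ := exists_sq_eq_two_mul_add has
  have hk' : k = √2 * √(a + s) := by
    rw [← sqrt_mul zero_le_two, ← hk, sqrt_sq hk0.le]
  calc ∫ x in Ioi 0, (x ^ 4 + 2 * a * x ^ 2 + s ^ 2)⁻¹
      = s⁻¹ * ∫ x in Ioi 0, (s / x ^ 2) • ((x - s / x) ^ 2 + k ^ 2)⁻¹ := by
        rw [← integral_const_mul]
        exact setIntegral_congr_fun measurableSet_Ioi fun x (hx : 0 < x) =>
          inv_quartic_eq_smul_comp_sub_div hs.ne' hk hx.ne'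
    _ = s⁻¹ * (2⁻¹ * (π / k)) := by
        rw [integral_Ioi_div_sq_smul_comp_sub_div_of_even hs (continuous_inv_sq_add_sq hk0.ne')
          (integrable_inv_sq_add_sq hk0.ne') (fun y => by simp only [even_two, Even.neg_pow]),
          integral_univ_inv_sq_add_sq hk0, smul_eq_mul]
    _ = π / (2 * √2 * s * √(a + s)) := by
        rw [hk']
        field_simp

end QuarticInverse

noncomputable def quarticIntegral (a t : ℝ) (n : ℕ) : ℝ :=
  ∫ x in Ioi 0, ((x ^ 4 + 2 * a * x ^ 2 + t) ^ n)⁻¹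

section QuarticIntegral

variable {a t : ℝ}

lemma integrableOn_Ioi_inv_quartic_pow (ha : 0 ≤ a) (ht : 0 < t) (n : ℕ) :
    IntegrableOn (fun x => ((x ^ 4 + 2 * a * x ^ 2 + t) ^ (n + 1))⁻¹) (Ioi 0) := by
  have hsqrt : √t ^ 2 = t := sq_sqrt ht.le
  have h := integrableOn_Ioi_inv_quartic (a := a) (sqrt_pos.2 ht) (by positivity)
  rw [hsqrt] at h
  refine (h.const_mul (t ^ n)⁻¹).mono'
    (Continuous.aestronglyMeasurable (Continuous.inv₀ (by fun_prop) fun x => by positivity))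
    (ae_of_all _ fun x => ?_)
  have hp : t ≤ x ^ 4 + 2 * a * x ^ 2 + t := by nlinarith [sq_nonneg x, sq_nonneg (x ^ 2)]
  rw [norm_inv, norm_pow, norm_of_nonneg (by linarith), ← mul_inv, pow_succ]
  gcongr

lemma hasDerivAt_inv_pow_add (X : ℝ) (n : ℕ) (ht : X + t ≠ 0) :
    HasDerivAt (fun t => ((X + t) ^ (n + 1))⁻¹) (-(n + 1) * ((X + t) ^ (n + 2))⁻¹) t := by
  refine ((((hasDerivAt_id' t).const_add X).fun_pow (n + 1)).fun_inv
    (pow_ne_zero _ ht)).congr_deriv ?_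
  field_simp
  push_cast
  ring

lemma hasDerivAt_quarticIntegral (ha : 0 ≤ a) (ht : 0 < t) (n : ℕ) :
    HasDerivAt (fun t => quarticIntegral a t (n + 1))
      (-(n + 1) * quarticIntegral a t (n + 2)) t := by
  have ht2 : 0 < t / 2 := half_pos ht
  have hpos : ∀ {x t' : ℝ}, t' ∈ Ioi (t / 2) → t / 2 < x ^ 4 + 2 * a * x ^ 2 + t' :=
    fun {x t'} (ht' : t / 2 < t') => by nlinarith [sq_nonneg x, sq_nonneg (x ^ 2)]
  have h := hasDerivAt_integral_of_dominated_loc_of_deriv_le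
    (μ := volume.restrict (Ioi 0)) (x₀ := t) (s := Ioi (t / 2))
    (F := fun t x => ((x ^ 4 + 2 * a * x ^ 2 + t) ^ (n + 1))⁻¹)
    (F' := fun t x => -(n + 1) * ((x ^ 4 + 2 * a * x ^ 2 + t) ^ (n + 2))⁻¹)
    (bound := fun x => (n + 1) * ((x ^ 4 + 2 * a * x ^ 2 + t / 2) ^ (n + 2))⁻¹)
    (Ioi_mem_nhds (half_lt_self ht))
    (Eventually.of_forall fun t' => (by fun_prop : Measurable _).aestronglyMeasurable)
    (integrableOn_Ioi_inv_quartic_pow ha ht n)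
    (by fun_prop : Measurable _).aestronglyMeasurable
    (ae_of_all _ fun x t' ht' => ?_)
    ((integrableOn_Ioi_inv_quartic_pow ha ht2 (n + 1)).const_mul _)
    (ae_of_all _ fun x t' ht' => hasDerivAt_inv_pow_add _ n (ht2.trans (hpos ht')).ne')
  · simpa only [quarticIntegral, integral_const_mul] using h.2
  · rw [norm_mul, norm_neg, norm_inv, norm_pow, norm_of_nonneg (by positivity : (0 : ℝ) ≤ n + 1),
      norm_of_nonneg (ht2.trans (hpos ht')).le]
    gcongr
    exact le_of_lt ht'

end QuarticIntegral

section SqrtAddSqrt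

variable {a : ℝ}

lemma hasDerivAt_sqrt_add_sqrt (ha : 0 ≤ a) {t : ℝ} (ht : 0 < t) :
    HasDerivAt (fun t => √(a + √t)) ((4 * √t * √(a + √t))⁻¹) t := by
  refine (((hasDerivAt_id' t).sqrt ht.ne').const_add a).sqrt (by positivity) |>.congr_deriv ?_
  field_simp
  ring

lemma iteratedDeriv_sqrt_add_sqrt (ha : 0 ≤ a) (m : ℕ) {t : ℝ} (ht : 0 < t) :
    iteratedDeriv (m + 1) (fun t => √(a + √t)) t =
      (-1) ^ m * m ! / (π * √2) * quarticIntegral a t (m + 1) := by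
  induction m generalizing t with
  | zero =>
    have hsqrt : 0 < √t := sqrt_pos.2 ht
    have hquartic := integral_Ioi_inv_quartic (a := a) hsqrt (by positivity)
    rw [sq_sqrt ht.le] at hquartic
    simp only [iteratedDeriv_one, (hasDerivAt_sqrt_add_sqrt ha ht).deriv, quarticIntegral,
      zero_add, pow_one, hquartic]
    have h2 : √2 ^ 2 = 2 := sq_sqrt zero_le_two
    field_simp
    linear_combination 2 * h2
  | succ m ih =>
    have hev : iteratedDeriv (m + 1) (fun t => √(a + √t)) =ᶠ[𝓝 t]
        fun t => (-1) ^ m * m ! / (π * √2) * quarticIntegral a t (m + 1) :=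
      eventually_of_mem (Ioi_mem_nhds ht) fun t' ht' => ih ht'
    rw [iteratedDeriv_succ, hev.deriv_eq,
      ((hasDerivAt_quarticIntegral ha ht m).const_mul _).deriv, Nat.factorial_succ]
    push_cast
    ring

end SqrtAddSqrt

theorem derivative_integral_relation (a : ℝ) (ha : 0 < a) (m : ℕ) :
    iteratedDeriv (m + 1) (fun c : ℝ => Real.sqrt (a + Real.sqrt (1 + c))) 0 =
      ((-1 : ℝ) ^ m * m.factorial / (π * Real.sqrt 2)) *
        ∫ x in Set.Ioi (0 : ℝ), 1 / (x ^ 4 + 2 * a * x ^ 2 + 1) ^ (m + 1) := by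
  rw [iteratedDeriv_comp_const_add (m + 1) (fun t => √(a + √t)) 1]
  beta_reduce
  rw [add_zero, iteratedDeriv_sqrt_add_sqrt ha.le m one_pos, quarticIntegral]
  simp only [one_div]
end

section
/- For all natural numbers m and real y > 0, with φ = y/2 + √((y/2)²+1), one has Σ_{k=0}^{m} C(m+k, m−k) y^(2k) = (φ^(2m+1) + φ^(−(2m+1))) / (φ + φ^(−1)). -/
open Finset

private lemma recB (x : ℝ) (m : ℕ) :
    ∑ k ∈ range (m+2), ((m+1+k).choose (2*k+1) : ℝ) * x^k =
      ∑ k ∈ range (m+1), ((m+k).choose (2*k+1) : ℝ) * x^k +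
      ∑ k ∈ range (m+1), ((m+k).choose (2*k) : ℝ) * x^k := by
  have e : ∀ k ∈ range (m+2), ((m+1+k).choose (2*k+1) : ℝ) * x^k =
      ((m+k).choose (2*k+1) : ℝ) * x^k + ((m+k).choose (2*k) : ℝ) * x^k := by
    intro k _
    have h1 : m+1+k = (m+k)+1 := by omega
    rw [h1, Nat.choose_succ_succ]
    push_cast; ring
  rw [sum_congr rfl e, sum_add_distrib,
    sum_range_succ (fun k => ((m+k).choose (2*k+1) : ℝ) * x^k) (m+1),
    sum_range_succ (fun k => ((m+k).choose (2*k) : ℝ) * x^k) (m+1)]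
  have z1 : (m+(m+1)).choose (2*(m+1)+1) = 0 := Nat.choose_eq_zero_of_lt (by omega)
  have z2 : (m+(m+1)).choose (2*(m+1)) = 0 := Nat.choose_eq_zero_of_lt (by omega)
  rw [z1, z2]
  push_cast; ring

private lemma recA (x : ℝ) (m : ℕ) :
    ∑ k ∈ range (m+2), ((m+1+k).choose (2*k) : ℝ) * x^k =
      ∑ k ∈ range (m+1), ((m+k).choose (2*k) : ℝ) * x^k +
      x * ∑ k ∈ range (m+2), ((m+1+k).choose (2*k+1) : ℝ) * x^k := by
  rw [Finset.sum_range_succ' (fun k => ((m+1+k).choose (2*k) : ℝ) * x^k) (m+1)]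
  have e : ∀ k ∈ range (m+1),
      ((m+1+(k+1)).choose (2*(k+1)) : ℝ) * x^(k+1) =
        x * (((m+1+k).choose (2*k+1) : ℝ) * x^k) +
          ((m+(k+1)).choose (2*(k+1)) : ℝ) * x^(k+1) := by
    intro k _
    have h1 : m+1+(k+1) = (m+1+k)+1 := by omega
    have h2 : 2*(k+1) = (2*k+1)+1 := by omega
    have h3 : m+(k+1) = m+1+k := by omega
    rw [h1, h2, Nat.choose_succ_succ, h3]
    push_cast; ring
  rw [sum_congr rfl e, sum_add_distrib, ← mul_sum,
    Finset.sum_range_succ (fun k => ((m+1+k).choose (2*k+1) : ℝ) * x^k) (m+1),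
    Finset.sum_range_succ' (fun k => ((m+k).choose (2*k) : ℝ) * x^k) m,
    Finset.sum_range_succ (fun k => ((m+(k+1)).choose (2*(k+1)) : ℝ) * x^(k+1)) m]
  have z1 : (m+1+(m+1)).choose (2*(m+1)+1) = 0 := Nat.choose_eq_zero_of_lt (by omega)
  have z2 : (m+(m+1)).choose (2*(m+1)) = 0 := Nat.choose_eq_zero_of_lt (by omega)
  rw [z1, z2]
  norm_num
  ring

theorem T_closed_form (m : ℕ) (y : ℝ) (hy : 0 < y)
    (φ : ℝ) (hφ : φ = y / 2 + Real.sqrt (y ^ 2 / 4 + 1)) :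
    ∑ k ∈ range (m + 1), (Nat.choose (m + k) (m - k) : ℝ) * y ^ (2 * k) =
      (φ ^ (2 * m + 1) + (φ⁻¹) ^ (2 * m + 1)) / (φ + φ⁻¹) := by
  have hsq : Real.sqrt (y^2/4+1) ^ 2 = y^2/4+1 := Real.sq_sqrt (by positivity)
  have hs0 : 0 ≤ Real.sqrt (y^2/4+1) := Real.sqrt_nonneg _
  have hs1 : 1 ≤ Real.sqrt (y^2/4+1) := by nlinarith
  have hφpos : 0 < φ := by rw [hφ]; nlinarith
  have hφ0 : φ ≠ 0 := ne_of_gt hφpos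
  have hrel : φ^2 = y*φ + 1 := by rw [hφ]; nlinarith
  set ψ : ℝ := φ⁻¹ with hψdef
  have hψ : φ * ψ = 1 := mul_inv_cancel₀ hφ0
  have hψpos : 0 < ψ := by positivity
  have hyψ : y = φ - ψ := by
    have h1 : φ * (φ - y) = 1 := by nlinarith
    have h2 : φ - y = φ⁻¹ := eq_inv_of_mul_eq_one_right h1
    rw [← hψdef] at h2
    linarith
  have hcpos : 0 < φ + ψ := by linarith
  have main : ∀ n : ℕ,
      (∑ k ∈ range (n+1), ((n+k).choose (2*k) : ℝ) * (y^2)^k) * (φ+ψ)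
          = φ^(2*n+1) + ψ^(2*n+1) ∧
      (∑ k ∈ range (n+1), ((n+k).choose (2*k+1) : ℝ) * (y^2)^k) * (y*(φ+ψ))
          = φ^(2*n) - ψ^(2*n) := by
    intro n
    induction n with
    | zero => constructor <;> simp
    | succ n ih =>
      obtain ⟨hA, hB⟩ := ih
      have hB' : (∑ k ∈ range (n+2), ((n+1+k).choose (2*k+1) : ℝ) * (y^2)^k) * (y*(φ+ψ))
          = φ^(2*(n+1)) - ψ^(2*(n+1)) := by
        rw [recB (y^2) n, add_mul, hB]
        have h3 : (∑ k ∈ range (n+1), ((n+k).choose (2*k) : ℝ) * (y^2)^k) * (y*(φ+ψ))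
            = y * ((∑ k ∈ range (n+1), ((n+k).choose (2*k) : ℝ) * (y^2)^k) * (φ+ψ)) := by ring
        rw [h3, hA, hyψ]
        linear_combination (ψ^(2*n) - φ^(2*n)) * hψ
      refine ⟨?_, hB'⟩
      rw [recA (y^2) n, add_mul, hA]
      have h4 : (y^2 * ∑ k ∈ range (n+2), ((n+1+k).choose (2*k+1) : ℝ) * (y^2)^k) * (φ+ψ)
          = y * ((∑ k ∈ range (n+2), ((n+1+k).choose (2*k+1) : ℝ) * (y^2)^k) * (y*(φ+ψ))) := by
        ring
      rw [h4, hB', hyψ]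
      linear_combination (-(φ^(2*n+1)) - ψ^(2*n+1)) * hψ
  have conv : ∀ k ∈ range (m+1),
      ((m+k).choose (m-k) : ℝ) * y^(2*k) = ((m+k).choose (2*k) : ℝ) * (y^2)^k := by
    intro k hk
    simp only [mem_range] at hk
    have h1 : (m+k).choose (m-k) = (m+k).choose (2*k) := by
      rw [← Nat.choose_symm (by omega : 2*k ≤ m+k)]
      congr 1; omega
    rw [h1, ← pow_mul]
  rw [sum_congr rfl conv, eq_div_iff (ne_of_gt hcpos)]
  exact (main m).1
end
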